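/- Performance-difference identity: let π be a stationary policy that is proper from the initial state x, let V* be the bounded optimal value function with V*(t) = 0 satisfying the Bellman equation V* = T V*, and define the optimal advantage A*(x,u) = f(x,u) + ∫ V*(F(x,u,w)) dμ(w) − V*(x). Then J^π(x) − V*(x) = E[ Σ_{k=0}^{τ−1} A*(x_k, π(x_k)) ]. -/

import Mathlib

open MeasureTheory ProbabilityTheory Filter
open scoped ENNReal

open Classical in
/-- Bellman operator of the SSP: `(T V)(x) = inf_{u ∈ U(x)} ( f(x,u) + ∫ V(F(x,u,w)) dμ(w) )`
for nonterminal `x`, and `(T V)(t) = 0`. -/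
noncomputable def bellman {X U W : Type*} [MeasurableSpace W] (μ : Measure W)
    (t : X) (Ua : X → Set U) (f : X → U → ℝ) (F : X → U → W → X)
    (V : X → ℝ) (x : X) : ℝ :=
  if x = t then 0 else ⨅ u : Ua x, (f x (u : U) + ∫ w, V (F x (u : U) w) ∂μ)

/-- Closed-loop trajectory driven by a disturbance sequence `ω : ℕ → W`:
`x₀ = x`, `x_{k+1} = F(x_k, π(x_k), ω_k)`. -/
def traj {X U W : Type*} (F : X → U → W → X) (π : X → U) (x : X) (ω : ℕ → W) : ℕ → X
  | 0 => x
  | k + 1 => F (traj F π x ω k) (π (traj F π x ω k)) (ω k)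

/-- The trajectory as a family of random variables on an abstract sample space `Ω`,
given the disturbance random variables `ξ k : Ω → W`. -/
def trajOn {X U W Ω : Type*} (F : X → U → W → X) (π : X → U) (x : X)
    (ξ : ℕ → Ω → W) (k : ℕ) (ω : Ω) : X :=
  traj F π x (fun i => ξ i ω) k

/-- Hitting time `τ = inf { k ≥ 0 : x_k = t }` of the terminal state (`∞` if never reached),
valued in `ℝ≥0∞`. -/
noncomputable def hitTime {X Ω : Type*} (t : X) (Y : ℕ → Ω → X) (ω : Ω) : ℝ≥0∞ :=
  ⨅ (k : ℕ) (_ : Y k ω = t), (k : ℝ≥0∞)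

/-- Total expected cost `J = E[ Σ_{k=0}^{τ-1} f(x_k, π(x_k)) ]` (in `ℝ≥0∞`; the stage cost
is nonnegative). -/
noncomputable def totalCost {X U Ω : Type*} [MeasurableSpace Ω] (P : Measure Ω)
    (t : X) (f : X → U → ℝ) (π : X → U) (Y : ℕ → Ω → X) : ℝ≥0∞ :=
  ∫⁻ ω, ∑' (k : ℕ), (if (k : ℝ≥0∞) < hitTime t Y ω
    then ENNReal.ofReal (f (Y k ω) (π (Y k ω))) else 0) ∂P

/-- Expected hitting time `E[τ]` (in `ℝ≥0∞`). -/
noncomputable def expHit {X Ω : Type*} [MeasurableSpace Ω] (P : Measure Ω)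
    (t : X) (Y : ℕ → Ω → X) : ℝ≥0∞ :=
  ∫⁻ ω, hitTime t Y ω ∂P

/-- Optimal advantage `A*(x,u) = f(x,u) + ∫ V*(F(x,u,w)) dμ(w) - V*(x)`. -/
noncomputable def advantage {X U W : Type*} [MeasurableSpace W] (μ : Measure W)
    (f : X → U → ℝ) (F : X → U → W → X) (Vstar : X → ℝ) (y : X) (u : U) : ℝ :=
  f y u + ∫ w, Vstar (F y u w) ∂μ - Vstar y

/-!
Write `s_n = {n < τ}`. The disturbance `w_n` is independent of `s_n` and `x_n`, which depend only
on `w_0, …, w_{n-1}`, so `E[1_{s_n} V*(x_{n+1})] = E[1_{s_n} ∫ V*(F(x_n, π x_n, w)) dμ(w)]`; since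
`V*(t) = 0` the indicator may then be moved from `s_n` to `s_{n+1}`. Hence
`E[1_{s_n} A*(x_n)] = E[1_{s_n} f(x_n)] + v_{n+1} - v_n` with `v_n = E[1_{s_n} V*(x_n)]`, and the
sum over `n` telescopes to `J^π(x) - V*(x)`, because `v_0 = V*(x)` and `v_n → 0` by dominated
convergence (`V*` is bounded and `τ < ∞` a.s.). The Bellman equation gives `A* ≥ 0` off `t`, so all
series have nonnegative terms and may be exchanged with the expectation.
-/

open Topology

theorem IndepFun.integral_comp_prodMk {Ω β W : Type*}
    [MeasurableSpace Ω] [MeasurableSpace β] [MeasurableSpace W] {P : Measure Ω}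
    [IsFiniteMeasure P] {μ : Measure W} [SFinite μ] {Z : Ω → β} {ζ : Ω → W}
    (hind : IndepFun Z ζ P) (hZ : Measurable Z) (hζ : Measurable ζ) (hlaw : P.map ζ = μ)
    {H : β × W → ℝ} (hH : Measurable H) (hint : Integrable (fun ω => H (Z ω, ζ ω)) P) :
    ∫ ω, H (Z ω, ζ ω) ∂P = ∫ ω, ∫ w, H (Z ω, w) ∂μ ∂P := by
  have hpair : Measurable fun ω => (Z ω, ζ ω) := hZ.prodMk hζ
  have hjoint : P.map (fun ω => (Z ω, ζ ω)) = (P.map Z).prod μ := by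
    rw [← hlaw]
    exact (indepFun_iff_map_prod_eq_prod_map_map hZ.aemeasurable hζ.aemeasurable).1 hind
  have hHint : Integrable H ((P.map Z).prod μ) := by
    rw [← hjoint]
    exact (integrable_map_measure hH.aestronglyMeasurable hpair.aemeasurable).2 hint
  calc ∫ ω, H (Z ω, ζ ω) ∂P = ∫ p, H p ∂(P.map Z).prod μ := by
        rw [← hjoint, integral_map hpair.aemeasurable hH.aestronglyMeasurable]
    _ = ∫ z, ∫ w, H (z, w) ∂μ ∂P.map Z := integral_prod H hHint
    _ = ∫ ω, ∫ w, H (Z ω, w) ∂μ ∂P :=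
        integral_map hZ.aemeasurable
          hH.stronglyMeasurable.integral_prod_right'.aestronglyMeasurable

theorem hasSum_of_eq_add_sub_of_tendsto {a v c : ℕ → ℝ} {A : ℝ} (ha : HasSum a A)
    (hv : Tendsto v atTop (𝓝 0)) (hc : ∀ n, c n = a n + v (n + 1) - v n) (hc0 : ∀ n, 0 ≤ c n) :
    HasSum c (A - v 0) := by
  refine (hasSum_iff_tendsto_nat_of_nonneg hc0 _).2 ?_
  have hpartial : ∀ N, ∑ n ∈ Finset.range N, c n = ∑ n ∈ Finset.range N, a n + v N - v 0 := by
    intro N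
    induction N with
    | zero => simp
    | succ N ih => rw [Finset.sum_range_succ, Finset.sum_range_succ, ih, hc]; ring
  simp_rw [hpartial]
  simpa using (ha.tendsto_sum_nat.add hv).sub_const (v 0)

theorem EReal.coe_ennreal_eq_coe_add_ofReal_sub {J : ℝ≥0∞} (hJ : J ≠ ⊤) {a : ℝ}
    (ha : a ≤ J.toReal) : (J : EReal) = a + (ENNReal.ofReal (J.toReal - a) : EReal) := by
  rw [EReal.coe_ennreal_ofReal, max_eq_left (by exact_mod_cast _root_.sub_nonneg.2 ha),
    ← EReal.coe_add, add_sub_cancel, EReal.coe_ennreal_toReal hJ]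

section HitTime

variable {X Ω : Type*} {t : X} {Y : ℕ → Ω → X} {ω : Ω}

theorem natCast_lt_hitTime_iff {n : ℕ} :
    (n : ℝ≥0∞) < hitTime t Y ω ↔ ∀ j ≤ n, Y j ω ≠ t := by
  constructor
  · intro h j hj hjt
    exact (h.trans_le ((iInf₂_le j hjt).trans (by exact_mod_cast hj))).false
  · intro h
    refine (ENNReal.lt_add_right (by simp) one_ne_zero).trans_le (le_iInf₂ fun k hk => ?_)
    have : n < k := by
      by_contra! hkn
      exact h k hkn hk
    exact_mod_cast this

theorem hitTime_lt_top_iff : hitTime t Y ω < ⊤ ↔ ∃ k, Y k ω = t := by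
  simp [hitTime, iInf_lt_iff]

theorem indicator_natCast_lt_hitTime_comp {g : X → ℝ} (hg : g t = 0) (n : ℕ) :
    {ω | (n : ℝ≥0∞) < hitTime t Y ω}.indicator (fun ω => g (Y n ω))
      = {ω | ∀ j < n, Y j ω ≠ t}.indicator (fun ω => g (Y n ω)) := by
  classical
  ext ω
  by_cases hYn : Y n ω = t
  · simp only [Set.indicator_apply, hYn, hg, ite_self]
  · have hiff : (∀ j ≤ n, Y j ω ≠ t) ↔ ∀ j < n, Y j ω ≠ t :=
      ⟨fun h j hj => h j hj.le, fun h j hj => hj.lt_or_eq.elim (h j) (· ▸ hYn)⟩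
    simp only [Set.indicator_apply, Set.mem_ofPred_eq, natCast_lt_hitTime_iff, hiff]

variable [MeasurableSpace X] [MeasurableSingletonClass X]

theorem measurableSet_natCast_lt_hitTime {m : MeasurableSpace Ω} {n : ℕ}
    (hY : ∀ j ≤ n, Measurable[m] (Y j)) :
    MeasurableSet[m] {ω | (n : ℝ≥0∞) < hitTime t Y ω} := by
  simp_rw [natCast_lt_hitTime_iff, Set.ofPred_forall]
  exact .iInter fun j => .iInter fun hj => hY j hj (measurableSet_singleton t).compl

end HitTime

theorem integrable_comp_of_abs_le {Ω X : Type*} [MeasurableSpace Ω] [MeasurableSpace X]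
    {P : Measure Ω} [IsFiniteMeasure P] {g : X → ℝ} (hg : Measurable g) {C : ℝ}
    (hC : ∀ y, |g y| ≤ C) {Z : Ω → X} (hZ : Measurable Z) : Integrable (fun ω => g (Z ω)) P :=
  .of_bound (hg.comp hZ).aestronglyMeasurable C (.of_forall fun _ => hC _)

section ClosedLoop

variable {X U W Ω : Type*} [MeasurableSpace X] [MeasurableSpace U] [mW : MeasurableSpace W]
  {F : X → U → W → X} {π : X → U} {x : X} {ξ : ℕ → Ω → W}

theorem measurable_trajOn_of_forall_lt {m : MeasurableSpace Ω}
    (hF : Measurable fun p : X × U × W => F p.1 p.2.1 p.2.2) (hπ : Measurable π) {n : ℕ}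
    (hξ : ∀ i < n, Measurable[m] (ξ i)) : ∀ k ≤ n, Measurable[m] (trajOn F π x ξ k)
  | 0, _ => measurable_const
  | k + 1, hk =>
    have ih := measurable_trajOn_of_forall_lt hF hπ hξ k (Nat.le_of_succ_le hk)
    hF.comp (ih.prodMk ((hπ.comp ih).prodMk (hξ k hk)))

abbrev historySigma (ξ : ℕ → Ω → W) (n : ℕ) : MeasurableSpace Ω :=
  ⨆ i < n, MeasurableSpace.comap (ξ i) mW

theorem measurable_of_lt_historySigma {n i : ℕ} (hi : i < n) :
    Measurable[historySigma ξ n] (ξ i) :=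
  .of_comap_le (le_iSup₂ (f := fun i (_ : i < n) => MeasurableSpace.comap (ξ i) mW) i hi)

variable [mΩ : MeasurableSpace Ω]

theorem historySigma_le (hξ : ∀ k, Measurable (ξ k)) (n : ℕ) : historySigma ξ n ≤ mΩ :=
  iSup₂_le fun i _ => (hξ i).comap_le

theorem measurable_trajOn (hF : Measurable fun p : X × U × W => F p.1 p.2.1 p.2.2)
    (hπ : Measurable π) (hξ : ∀ k, Measurable (ξ k)) (k : ℕ) :
    Measurable (trajOn F π x ξ k) :=
  measurable_trajOn_of_forall_lt hF hπ (fun i _ => hξ i) k le_rfl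

theorem indep_historySigma_comap {P : Measure Ω} (hξ : ∀ k, Measurable (ξ k))
    (hind : iIndepFun ξ P) (n : ℕ) :
    Indep (historySigma ξ n) (MeasurableSpace.comap (ξ n) mW) P := by
  have := indep_iSup_of_disjoint (fun i => (hξ i).comap_le) hind.iIndep
    (S := Set.Iio n) (T := {n}) (by simp)
  simpa using this

theorem setIntegral_comp_trajOn_succ {P : Measure Ω} [IsFiniteMeasure P] {μ : Measure W}
    [SFinite μ] (hF : Measurable fun p : X × U × W => F p.1 p.2.1 p.2.2) (hπ : Measurable π)
    (hξ : ∀ k, Measurable (ξ k)) (hind : iIndepFun ξ P) {n : ℕ} (hlaw : P.map (ξ n) = μ)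
    {g : X → ℝ} (hg : Measurable g) {C : ℝ} (hgC : ∀ y, |g y| ≤ C) {s : Set Ω}
    (hs : MeasurableSet[historySigma ξ n] s) :
    ∫ ω in s, g (trajOn F π x ξ (n + 1) ω) ∂P
      = ∫ ω in s, ∫ w, g (F (trajOn F π x ξ n ω) (π (trajOn F π x ξ n ω)) w) ∂μ ∂P := by
  have hm := historySigma_le hξ n
  have hYm : Measurable[historySigma ξ n] (trajOn F π x ξ n) :=
    measurable_trajOn_of_forall_lt hF hπ (fun i hi => measurable_of_lt_historySigma hi) n le_rfl
  set Z : Ω → ℝ × X := fun ω => (s.indicator (fun _ => 1) ω, trajOn F π x ξ n ω)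
  have hZm : Measurable[historySigma ξ n] Z := (measurable_const.indicator hs).prodMk hYm
  have hZ : Measurable Z := hZm.mono hm le_rfl
  have hind' : IndepFun Z (ξ n) P := (IndepFun_iff_Indep _ _ _).2
    (indep_of_indep_of_le_left (indep_historySigma_comap hξ hind n) hZm.comap_le)
  set H : (ℝ × X) × W → ℝ := fun p => p.1.1 * g (F p.1.2 (π p.1.2) p.2)
  have hH : Measurable H := measurable_fst.fst.mul
    (hg.comp (hF.comp (measurable_fst.snd.prodMk ((hπ.comp measurable_fst.snd).prodMk
      measurable_snd))))
  have hHZ :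
      (fun ω => H (Z ω, ξ n ω)) = s.indicator fun ω => g (trajOn F π x ξ (n + 1) ω) := by
    ext ω; by_cases hω : ω ∈ s <;> simp [H, Z, hω, trajOn, traj]
  have hHZ' : (fun ω => ∫ w, H (Z ω, w) ∂μ)
      = s.indicator fun ω =>
          ∫ w, g (F (trajOn F π x ξ n ω) (π (trajOn F π x ξ n ω)) w) ∂μ := by
    ext ω; by_cases hω : ω ∈ s <;> simp [H, Z, hω]
  have hint : Integrable (fun ω => H (Z ω, ξ n ω)) P := by
    rw [hHZ]
    exact (integrable_comp_of_abs_le hg hgC (measurable_trajOn hF hπ hξ (n + 1))).indicator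
      (hm s hs)
  have key := IndepFun.integral_comp_prodMk hind' hZ (hξ n) hlaw hH hint
  rwa [hHZ, hHZ', integral_indicator (hm s hs), integral_indicator (hm s hs)] at key

end ClosedLoop

section HitTimeIntegrals

variable {X U Ω : Type*} [MeasurableSpace X] [MeasurableSingletonClass X] [MeasurableSpace Ω]
  {P : Measure Ω} {t : X} {Y : ℕ → Ω → X}

theorem tendsto_setIntegral_natCast_lt_hitTime [IsFiniteMeasure P]
    (hY : ∀ n, Measurable (Y n)) {g : X → ℝ} (hg : Measurable g) {C : ℝ} (hC : ∀ y, |g y| ≤ C)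
    (hτ : ∀ᵐ ω ∂P, hitTime t Y ω < ⊤) :
    Tendsto (fun n : ℕ => ∫ ω in {ω | (n : ℝ≥0∞) < hitTime t Y ω}, g (Y n ω) ∂P) atTop
      (𝓝 0) := by
  have hs (n : ℕ) := measurableSet_natCast_lt_hitTime (t := t) (n := n) fun j _ => hY j
  simp_rw [← integral_indicator (hs _)]
  have hlim := tendsto_integral_of_dominated_convergence (μ := P) (fun _ => C)
    (fun n => ((hg.comp (hY n)).indicator (hs n)).aestronglyMeasurable) (integrable_const C)
    (fun n => .of_forall fun ω => (norm_indicator_le_norm_self _ ω).trans (hC _))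
    (f := fun _ => 0) ?_
  · simpa [Function.comp_def] using hlim
  filter_upwards [hτ] with ω hω
  obtain ⟨k, hk⟩ := hitTime_lt_top_iff.1 hω
  refine tendsto_const_nhds.congr' ?_
  filter_upwards [eventually_ge_atTop k] with n hn
  refine (Set.indicator_of_notMem ?_ _).symm
  simpa [natCast_lt_hitTime_iff] using ⟨k, hn, hk⟩

theorem setIntegral_zero_lt_hitTime [IsProbabilityMeasure P] {x : X} (hY0 : ∀ ω, Y 0 ω = x)
    {g : X → ℝ} (hg : g t = 0) :
    ∫ ω in {ω | ((0 : ℕ) : ℝ≥0∞) < hitTime t Y ω}, g (Y 0 ω) ∂P = g x := by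
  have hs : MeasurableSet {ω | ((0 : ℕ) : ℝ≥0∞) < hitTime t Y ω} :=
    measurableSet_natCast_lt_hitTime fun j hj => by
      rw [Nat.le_zero.1 hj, funext hY0]
      exact measurable_const
  rw [← integral_indicator hs, indicator_natCast_lt_hitTime_comp hg]
  simp [hY0]

theorem setIntegral_natCast_lt_hitTime_comp_succ {g : X → ℝ} (hg : g t = 0)
    (hY : ∀ n, Measurable (Y n)) (n : ℕ) :
    ∫ ω in {ω | (n : ℝ≥0∞) < hitTime t Y ω}, g (Y (n + 1) ω) ∂P
      = ∫ ω in {ω | ((n + 1 : ℕ) : ℝ≥0∞) < hitTime t Y ω}, g (Y (n + 1) ω) ∂P := by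
  rw [← integral_indicator (measurableSet_natCast_lt_hitTime fun j _ => hY j),
    ← integral_indicator (measurableSet_natCast_lt_hitTime fun j _ => hY j),
    indicator_natCast_lt_hitTime_comp hg (n + 1)]
  simp_rw [Nat.lt_succ_iff, ← natCast_lt_hitTime_iff]

variable [MeasurableSpace U] {c : X → U → ℝ} {π : X → U}

theorem totalCost_eq_tsum_setLIntegral (hY : ∀ n, Measurable (Y n))
    (hc : Measurable fun p : X × U => c p.1 p.2) (hπ : Measurable π) :
    totalCost P t c π Y = ∑' n : ℕ, ∫⁻ ω in {ω | (n : ℝ≥0∞) < hitTime t Y ω},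
      ENNReal.ofReal (c (Y n ω) (π (Y n ω))) ∂P := by
  have hs (n : ℕ) := measurableSet_natCast_lt_hitTime (t := t) (n := n) fun j _ => hY j
  have hcY (n : ℕ) : Measurable fun ω => c (Y n ω) (π (Y n ω)) :=
    hc.comp ((hY n).prodMk (hπ.comp (hY n)))
  simp_rw [← lintegral_indicator (hs _)]
  rw [← lintegral_tsum fun n => ((hcY n).ennreal_ofReal.indicator (hs n)).aemeasurable]
  unfold totalCost
  congr with ω
  congr with n
  simp only [Set.indicator_apply, Set.mem_ofPred_eq]

theorem integrableOn_of_totalCost_ne_top (hY : ∀ n, Measurable (Y n))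
    (hc : Measurable fun p : X × U => c p.1 p.2) (hπ : Measurable π) (hc0 : ∀ y u, 0 ≤ c y u)
    (hJ : totalCost P t c π Y ≠ ⊤) (n : ℕ) :
    IntegrableOn (fun ω => c (Y n ω) (π (Y n ω))) {ω | (n : ℝ≥0∞) < hitTime t Y ω} P := by
  refine ⟨(hc.comp ((hY n).prodMk (hπ.comp (hY n)))).aestronglyMeasurable,
    (hasFiniteIntegral_iff_ofReal (.of_forall fun ω => hc0 _ _)).2 ?_⟩
  rw [totalCost_eq_tsum_setLIntegral hY hc hπ] at hJ
  exact (ENNReal.ne_top_of_tsum_ne_top hJ n).lt_top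

theorem hasSum_setIntegral_of_totalCost_ne_top (hY : ∀ n, Measurable (Y n))
    (hc : Measurable fun p : X × U => c p.1 p.2) (hπ : Measurable π) (hc0 : ∀ y u, 0 ≤ c y u)
    (hJ : totalCost P t c π Y ≠ ⊤) :
    HasSum (fun n : ℕ => ∫ ω in {ω | (n : ℝ≥0∞) < hitTime t Y ω}, c (Y n ω) (π (Y n ω)) ∂P)
      (totalCost P t c π Y).toReal := by
  rw [totalCost_eq_tsum_setLIntegral hY hc hπ] at hJ ⊢
  rw [ENNReal.tsum_toReal_eq (ENNReal.ne_top_of_tsum_ne_top hJ)]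
  convert ENNReal.hasSum_toReal hJ using 2 with n
  exact integral_eq_lintegral_of_nonneg_ae (.of_forall fun ω => hc0 _ _)
    (hc.comp ((hY n).prodMk (hπ.comp (hY n)))).aestronglyMeasurable

theorem totalCost_eq_ofReal_of_hasSum (hY : ∀ n, Measurable (Y n))
    (hc : Measurable fun p : X × U => c p.1 p.2) (hπ : Measurable π)
    (hint : ∀ n : ℕ, IntegrableOn (fun ω => c (Y n ω) (π (Y n ω)))
      {ω | (n : ℝ≥0∞) < hitTime t Y ω} P)
    (hnn : ∀ n : ℕ, ∀ ω ∈ {ω | (n : ℝ≥0∞) < hitTime t Y ω}, 0 ≤ c (Y n ω) (π (Y n ω)))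
    {S : ℝ} (hS : HasSum (fun n : ℕ =>
      ∫ ω in {ω | (n : ℝ≥0∞) < hitTime t Y ω}, c (Y n ω) (π (Y n ω)) ∂P) S) :
    totalCost P t c π Y = ENNReal.ofReal S := by
  have hs (n : ℕ) := measurableSet_natCast_lt_hitTime (t := t) (n := n) fun j _ => hY j
  rw [totalCost_eq_tsum_setLIntegral hY hc hπ, ← hS.tsum_eq,
    ENNReal.ofReal_tsum_of_nonneg (fun n => setIntegral_nonneg (hs n) (hnn n)) hS.summable]
  exact tsum_congr fun n => (ofReal_integral_eq_lintegral_ofReal (hint n)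
    (ae_restrict_of_forall_mem (hs n) (hnn n))).symm

end HitTimeIntegrals

section Bellman

variable {X U W : Type*} [MeasurableSpace W] {μ : Measure W} {t : X} {Ua : X → Set U}
  {f : X → U → ℝ} {F : X → U → W → X} {V : X → ℝ} {C : ℝ}

theorem abs_integral_le_of_forall_abs_le [IsProbabilityMeasure μ] {g : W → ℝ}
    (hg : ∀ w, |g w| ≤ C) : |∫ w, g w ∂μ| ≤ C := by
  simpa using norm_integral_le_of_norm_le_const (μ := μ) (f := g) (.of_forall hg)

theorem bellman_le {y : X} (hy : y ≠ t) {u : U} (hu : u ∈ Ua y)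
    (hbdd : BddBelow (Set.range fun v : Ua y => f y v + ∫ w, V (F y v w) ∂μ)) :
    bellman μ t Ua f F V y ≤ f y u + ∫ w, V (F y u w) ∂μ := by
  rw [bellman, if_neg hy]
  exact ciInf_le hbdd ⟨u, hu⟩

theorem advantage_nonneg_of_eq_bellman [IsProbabilityMeasure μ] (hC : ∀ z, |V z| ≤ C) {y : X}
    (hfix : V y = bellman μ t Ua f F V y) (hy : y ≠ t) (hf : ∀ u, 0 ≤ f y u) {u : U}
    (hu : u ∈ Ua y) : 0 ≤ advantage μ f F V y u := by
  have hbdd : BddBelow (Set.range fun v : Ua y => f y v + ∫ w, V (F y v w) ∂μ) := by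
    refine ⟨-C, ?_⟩
    rintro _ ⟨v, rfl⟩
    have := (abs_le.1 (abs_integral_le_of_forall_abs_le (μ := μ) fun w => hC (F y v w))).1
    linarith [hf v]
  have := bellman_le hy hu hbdd
  rw [advantage]
  linarith

variable [MeasurableSpace X] [MeasurableSpace U]

theorem measurable_integral_comp (hF : Measurable fun p : X × U × W => F p.1 p.2.1 p.2.2)
    (hV : Measurable V) [SFinite μ] :
    Measurable fun p : X × U => ∫ w, V (F p.1 p.2 w) ∂μ := by
  have : Measurable fun q : (X × U) × W => V (F q.1.1 q.1.2 q.2) :=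
    hV.comp (hF.comp (measurable_fst.fst.prodMk (measurable_fst.snd.prodMk measurable_snd)))
  exact this.stronglyMeasurable.integral_prod_right'.measurable

theorem measurable_advantage (hF : Measurable fun p : X × U × W => F p.1 p.2.1 p.2.2)
    (hf : Measurable fun p : X × U => f p.1 p.2) (hV : Measurable V) [SFinite μ] :
    Measurable fun p : X × U => advantage μ f F V p.1 p.2 :=
  (hf.add (measurable_integral_comp hF hV)).sub (hV.comp measurable_fst)

end Bellman

section PerformanceDifference

variable {X U W Ω : Type*} [MeasurableSpace X] [MeasurableSpace U]
  [MeasurableSpace W] [MeasurableSpace Ω] {P : Measure Ω} {μ : Measure W} {t : X}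
  {F : X → U → W → X} {f : X → U → ℝ} {π : X → U} {x : X} {ξ : ℕ → Ω → W} {V : X → ℝ}
  {C : ℝ}

theorem integrableOn_advantage_trajOn [IsFiniteMeasure P] [IsProbabilityMeasure μ]
    (hF : Measurable fun p : X × U × W => F p.1 p.2.1 p.2.2) (hπ : Measurable π)
    (hξ : ∀ k, Measurable (ξ k)) (hV : Measurable V) (hC : ∀ y, |V y| ≤ C) {n : ℕ} {s : Set Ω}
    (hfint : IntegrableOn (fun ω => f (trajOn F π x ξ n ω) (π (trajOn F π x ξ n ω))) s P) :
    IntegrableOn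
      (fun ω => advantage μ f F V (trajOn F π x ξ n ω) (π (trajOn F π x ξ n ω))) s P := by
  have hY := measurable_trajOn (x := x) hF hπ hξ n
  exact (hfint.add (integrable_comp_of_abs_le (measurable_integral_comp hF hV)
    (fun _ => abs_integral_le_of_forall_abs_le fun _ => hC _)
    (hY.prodMk (hπ.comp hY))).integrableOn).sub
    (integrable_comp_of_abs_le hV hC hY).integrableOn

theorem setIntegral_advantage_trajOn [MeasurableSingletonClass X] [IsFiniteMeasure P]
    [IsProbabilityMeasure μ]
    (hF : Measurable fun p : X × U × W => F p.1 p.2.1 p.2.2) (hπ : Measurable π)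
    (hξ : ∀ k, Measurable (ξ k)) (hind : iIndepFun ξ P) {n : ℕ} (hlaw : P.map (ξ n) = μ)
    (hV : Measurable V) (hC : ∀ y, |V y| ≤ C) (hVt : V t = 0)
    (hfint : IntegrableOn (fun ω => f (trajOn F π x ξ n ω) (π (trajOn F π x ξ n ω)))
      {ω | (n : ℝ≥0∞) < hitTime t (trajOn F π x ξ) ω} P) :
    ∫ ω in {ω | (n : ℝ≥0∞) < hitTime t (trajOn F π x ξ) ω},
        advantage μ f F V (trajOn F π x ξ n ω) (π (trajOn F π x ξ n ω)) ∂P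
      = ∫ ω in {ω | (n : ℝ≥0∞) < hitTime t (trajOn F π x ξ) ω},
          f (trajOn F π x ξ n ω) (π (trajOn F π x ξ n ω)) ∂P
        + ∫ ω in {ω | ((n + 1 : ℕ) : ℝ≥0∞) < hitTime t (trajOn F π x ξ) ω},
          V (trajOn F π x ξ (n + 1) ω) ∂P
        - ∫ ω in {ω | (n : ℝ≥0∞) < hitTime t (trajOn F π x ξ) ω},
          V (trajOn F π x ξ n ω) ∂P := by
  have hY := measurable_trajOn (x := x) hF hπ hξ
  set s := {ω | (n : ℝ≥0∞) < hitTime t (trajOn F π x ξ) ω}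
  have hs : MeasurableSet[historySigma ξ n] s := measurableSet_natCast_lt_hitTime
    (measurable_trajOn_of_forall_lt hF hπ fun _ hi => measurable_of_lt_historySigma hi)
  have hGint : IntegrableOn
      (fun ω => ∫ w, V (F (trajOn F π x ξ n ω) (π (trajOn F π x ξ n ω)) w) ∂μ) s P :=
    (integrable_comp_of_abs_le (measurable_integral_comp hF hV)
      (fun _ => abs_integral_le_of_forall_abs_le fun _ => hC _)
      ((hY n).prodMk (hπ.comp (hY n)))).integrableOn
  have hfGint : IntegrableOn (fun ω => f (trajOn F π x ξ n ω) (π (trajOn F π x ξ n ω))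
      + ∫ w, V (F (trajOn F π x ξ n ω) (π (trajOn F π x ξ n ω)) w) ∂μ) s P := hfint.add hGint
  simp only [advantage]
  rw [integral_sub hfGint (integrable_comp_of_abs_le hV hC (hY n)).integrableOn,
    integral_add hfint hGint, ← setIntegral_comp_trajOn_succ hF hπ hξ hind hlaw hV hC hs,
    setIntegral_natCast_lt_hitTime_comp_succ hVt hY n]

end PerformanceDifference

theorem performance_difference_identity_general
    {X U W Ω : Type*} [MeasurableSpace X] [MeasurableSingletonClass X]
    [MeasurableSpace U] [MeasurableSpace W] [MeasurableSpace Ω]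
    (μ : Measure W) [IsProbabilityMeasure μ] (P : Measure Ω) [IsProbabilityMeasure P]
    (t : X) (Ua : X → Set U) (F : X → U → W → X) (f : X → U → ℝ)
    -- SSP model: nonempty control sets, nonnegative measurable stage cost, measurable dynamics,
    -- absorbing cost-free terminal state
    (hfnn : ∀ y u, 0 ≤ f y u)
    (hFmeas : Measurable fun p : X × U × W => F p.1 p.2.1 p.2.2)
    (hfmeas : Measurable fun p : X × U => f p.1 p.2)
    -- V* : bounded measurable, V*(t)=0, Bellman fixed point, well-defined one-step integrals
    (Vstar : X → ℝ) (hVsmeas : Measurable Vstar) (hVsbdd : ∃ C, ∀ y, |Vstar y| ≤ C)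
    (hVst : Vstar t = 0) (hVsfix : ∀ y, Vstar y = bellman μ t Ua f F Vstar y)
    (π : X → U) (hπmeas : Measurable π) (hπadm : ∀ y, π y ∈ Ua y)
    -- i.i.d. disturbance sequence with common law μ on an abstract probability space
    (ξ : ℕ → Ω → W) (hξmeas : ∀ k, Measurable (ξ k))
    (hξindep : iIndepFun ξ P)
    (hξlaw : ∀ k, P.map (ξ k) = μ)
    -- properness of the closed loop from x: τ < ∞ a.s. and J(x) < ∞
    (x : X)
    (hproper_tau : ∀ᵐ ω ∂P, hitTime t (trajOn F π x ξ) ω < ⊤)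
    (hproper_J : totalCost P t f π (trajOn F π x ξ) < ⊤) :
    (totalCost P t f π (trajOn F π x ξ) : EReal)
      = (Vstar x : EReal) +
        ((∫⁻ ω, ∑' (k : ℕ), (if (k : ℝ≥0∞) < hitTime t (trajOn F π x ξ) ω
            then ENNReal.ofReal
              (advantage μ f F Vstar (trajOn F π x ξ k ω) (π (trajOn F π x ξ k ω)))
            else 0) ∂P : ℝ≥0∞) : EReal) := by
  obtain ⟨C, hC⟩ := hVsbdd
  have hY := measurable_trajOn (x := x) hFmeas hπmeas hξmeas
  have hs (n : ℕ) := measurableSet_natCast_lt_hitTime (t := t) (n := n) fun j _ => hY j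
  have hfint := integrableOn_of_totalCost_ne_top hY hfmeas hπmeas hfnn hproper_J.ne
  have hAnn (n : ℕ) : ∀ ω ∈ {ω | (n : ℝ≥0∞) < hitTime t (trajOn F π x ξ) ω},
      0 ≤ advantage μ f F Vstar (trajOn F π x ξ n ω) (π (trajOn F π x ξ n ω)) := fun ω hω =>
    advantage_nonneg_of_eq_bellman hC (hVsfix _) (natCast_lt_hitTime_iff.1 hω n le_rfl)
      (hfnn _) (hπadm _)
  have hsum := hasSum_of_eq_add_sub_of_tendsto
    (hasSum_setIntegral_of_totalCost_ne_top hY hfmeas hπmeas hfnn hproper_J.ne)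
    (tendsto_setIntegral_natCast_lt_hitTime hY hVsmeas hC hproper_tau)
    (fun n => setIntegral_advantage_trajOn hFmeas hπmeas hξmeas hξindep (hξlaw n) hVsmeas hC
      hVst (hfint n))
    fun n => setIntegral_nonneg (hs n) (hAnn n)
  rw [setIntegral_zero_lt_hitTime (fun _ => rfl) hVst] at hsum
  change _ = _ + (totalCost P t (advantage μ f F Vstar) π (trajOn F π x ξ) : EReal)
  rw [totalCost_eq_ofReal_of_hasSum hY (measurable_advantage hFmeas hfmeas hVsmeas) hπmeas
    (fun n => integrableOn_advantage_trajOn hFmeas hπmeas hξmeas hVsmeas hC (hfint n)) hAnn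
    hsum]
  exact EReal.coe_ennreal_eq_coe_add_ofReal_sub hproper_J.ne
    (sub_nonneg.1 (hsum.nonneg fun n => setIntegral_nonneg (hs n) (hAnn n)))

/-- Performance-difference identity: for a proper stationary admissible policy `π` from `x`,
`J^π(x) - V*(x) = E[ Σ_{k=0}^{τ-1} A*(x_k, π(x_k)) ]`, stated in `EReal` as
`J^π(x) = V*(x) + E[ Σ_{k=0}^{τ-1} A*(x_k, π(x_k)) ]`. -/
theorem performance_difference_identity
    {X U W Ω : Type*} [MeasurableSpace X] [MeasurableSingletonClass X]
    [MeasurableSpace U] [MeasurableSpace W] [MeasurableSpace Ω]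
    (μ : Measure W) [IsProbabilityMeasure μ] (P : Measure Ω) [IsProbabilityMeasure P]
    (t : X) (u0 : U) (Ua : X → Set U) (F : X → U → W → X) (f : X → U → ℝ)
    -- SSP model: nonempty control sets, nonnegative measurable stage cost, measurable dynamics,
    -- absorbing cost-free terminal state
    (hUne : ∀ y, (Ua y).Nonempty) (hfnn : ∀ y u, 0 ≤ f y u)
    (hFmeas : Measurable fun p : X × U × W => F p.1 p.2.1 p.2.2)
    (hfmeas : Measurable fun p : X × U => f p.1 p.2)
    (hUt : Ua t = {u0}) (hft : f t u0 = 0) (hFt : ∀ w, F t u0 w = t)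
    -- V* : bounded measurable, V*(t)=0, Bellman fixed point, well-defined one-step integrals
    (Vstar : X → ℝ) (hVsmeas : Measurable Vstar) (hVsbdd : ∃ C, ∀ y, |Vstar y| ≤ C)
    (hVst : Vstar t = 0) (hVsfix : ∀ y, Vstar y = bellman μ t Ua f F Vstar y)
    (hVsint : ∀ y u, Integrable (fun w => Vstar (F y u w)) μ)
    (π : X → U) (hπmeas : Measurable π) (hπadm : ∀ y, π y ∈ Ua y)
    -- i.i.d. disturbance sequence with common law μ on an abstract probability space
    (ξ : ℕ → Ω → W) (hξmeas : ∀ k, Measurable (ξ k))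
    (hξindep : iIndepFun ξ P)
    (hξlaw : ∀ k, P.map (ξ k) = μ)
    -- properness of the closed loop from x: τ < ∞ a.s. and J(x) < ∞
    (x : X)
    (hproper_tau : ∀ᵐ ω ∂P, hitTime t (trajOn F π x ξ) ω < ⊤)
    (hproper_J : totalCost P t f π (trajOn F π x ξ) < ⊤) :
    (totalCost P t f π (trajOn F π x ξ) : EReal)
      = (Vstar x : EReal) +
        ((∫⁻ ω, ∑' (k : ℕ), (if (k : ℝ≥0∞) < hitTime t (trajOn F π x ξ) ω
            then ENNReal.ofReal
              (advantage μ f F Vstar (trajOn F π x ξ k ω) (π (trajOn F π x ξ k ω)))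
            else 0) ∂P : ℝ≥0∞) : EReal) :=
  performance_difference_identity_general μ P t Ua F f hfnn hFmeas hfmeas Vstar hVsmeas hVsbdd hVst
    hVsfix π hπmeas hπadm ξ hξmeas hξindep hξlaw x hproper_tau hproper_J
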